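/- For every (μ)(ν) ∈ X_C^{*2} one has (μ)(ν) ≤ Φ_C((μ)(ν)) in the dominance-type order on pairs of partitions; similarly for every (μ)(ν) ∈ X_B^{*2}, (μ)(ν) ≤ Φ_B((μ)(ν)). -/

import Mathlib

/-!
Both maps only move boxes between two entries of the reading sequence
`μ₁, ν₁, μ₂, ν₂, …` and preserve their sum: `Φ_B` moves them from `ν_i` to `μ_i`, `Φ_C` from
`μ_{i+1}` to `ν_i`. In both cases the boxes move to an earlier place of that sequence, and the
order compares exactly the partial sums of the reading sequence, which can then only grow.
-/

open Finset

/-- A partition: weakly decreasing, finitely supported sequence of naturals (0-indexed). -/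
def IsPartition (μ : ℕ → ℕ) : Prop :=
  Antitone μ ∧ ∃ N, ∀ i, N ≤ i → μ i = 0

/-- Membership in `P_2(n)`: a pair of partitions of total size `n`. -/
def PairP2 (n : ℕ) (p : (ℕ → ℕ) × (ℕ → ℕ)) : Prop :=
  IsPartition p.1 ∧ IsPartition p.2 ∧
    ∃ N, (∀ i, N ≤ i → p.1 i = 0 ∧ p.2 i = 0) ∧
      (∑ i ∈ range N, (p.1 i + p.2 i)) = n

/-- The dominance-type order on pairs of partitions (0-indexed: `p.1 0` is `μ_1`). -/
def PairLE (p q : (ℕ → ℕ) × (ℕ → ℕ)) : Prop :=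
  (∀ j, ∑ i ∈ range j, (p.1 i + p.2 i) ≤ ∑ i ∈ range j, (q.1 i + q.2 i)) ∧
  (∀ j, (∑ i ∈ range j, (p.1 i + p.2 i)) + p.1 j ≤
        (∑ i ∈ range j, (q.1 i + q.2 i)) + q.1 j)

/-- The map `Φ_C` on pairs of partitions (0-indexed). -/
def PhiC (p : (ℕ → ℕ) × (ℕ → ℕ)) : (ℕ → ℕ) × (ℕ → ℕ) :=
  (fun i => match i with
    | 0 => p.1 0
    | j + 1 =>
        if p.2 j + 1 < p.1 (j + 1) then (p.1 (j + 1) + p.2 j + 1) / 2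
        else p.1 (j + 1),
   fun i =>
    if p.2 i + 1 < p.1 (i + 1) then (p.1 (i + 1) + p.2 i) / 2 else p.2 i)

/-- The map `Φ_B` on pairs of partitions (0-indexed). -/
def PhiB (p : (ℕ → ℕ) × (ℕ → ℕ)) : (ℕ → ℕ) × (ℕ → ℕ) :=
  (fun i => if p.1 i + 2 < p.2 i then (p.1 i + p.2 i - 1) / 2 else p.1 i,
   fun i => if p.1 i + 2 < p.2 i then (p.1 i + p.2 i + 2) / 2 else p.2 i)

theorem sum_range_add_add_eq {M : Type*} [AddCommMonoid M] (f g : ℕ → M) (j : ℕ) :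
    ∑ i ∈ range j, (f i + g i) + f j = f 0 + ∑ i ∈ range j, (g i + f (i + 1)) := by
  rw [sum_add_distrib, sum_add_distrib, add_right_comm, ← sum_range_succ, sum_range_succ',
    add_comm (∑ i ∈ range j, f (i + 1)), add_assoc]
  exact congrArg _ (add_comm _ _)

theorem pairLE_of_sum_eq_of_fst_le {p q : (ℕ → ℕ) × (ℕ → ℕ)}
    (hsum : ∀ i, p.1 i + p.2 i = q.1 i + q.2 i) (hfst : ∀ i, p.1 i ≤ q.1 i) : PairLE p q := by
  have hsums : ∀ j, ∑ i ∈ range j, (p.1 i + p.2 i) = ∑ i ∈ range j, (q.1 i + q.2 i) :=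
    fun j => sum_congr rfl fun i _ => hsum i
  exact ⟨fun j => (hsums j).le, fun j => hsums j ▸ Nat.add_le_add_left (hfst j) _⟩

theorem pairLE_of_shifted_sum_eq_of_snd_le {p q : (ℕ → ℕ) × (ℕ → ℕ)} (h0 : p.1 0 = q.1 0)
    (hsum : ∀ i, p.2 i + p.1 (i + 1) = q.2 i + q.1 (i + 1)) (hsnd : ∀ i, p.2 i ≤ q.2 i) :
    PairLE p q := by
  have hhalf : ∀ j, ∑ i ∈ range j, (p.1 i + p.2 i) + p.1 j =
      ∑ i ∈ range j, (q.1 i + q.2 i) + q.1 j := fun j => by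
    rw [sum_range_add_add_eq, sum_range_add_add_eq, h0, sum_congr rfl fun i _ => hsum i]
  refine ⟨fun j => ?_, fun j => (hhalf j).le⟩
  cases j with
  | zero => simp
  | succ j =>
    rw [sum_range_succ, sum_range_succ, ← add_assoc, ← add_assoc, hhalf j]
    exact Nat.add_le_add_left (hsnd j) _

theorem phiC_fst_zero (p : (ℕ → ℕ) × (ℕ → ℕ)) : (PhiC p).1 0 = p.1 0 := rfl

theorem phiC_snd_add_fst_succ (p : (ℕ → ℕ) × (ℕ → ℕ)) (i : ℕ) :
    (PhiC p).2 i + (PhiC p).1 (i + 1) = p.2 i + p.1 (i + 1) := by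
  simp only [PhiC]
  split_ifs <;> omega

theorem le_phiC_snd (p : (ℕ → ℕ) × (ℕ → ℕ)) (i : ℕ) : p.2 i ≤ (PhiC p).2 i := by
  simp only [PhiC]
  split_ifs <;> omega

theorem phiB_fst_add_snd (p : (ℕ → ℕ) × (ℕ → ℕ)) (i : ℕ) :
    (PhiB p).1 i + (PhiB p).2 i = p.1 i + p.2 i := by
  simp only [PhiB]
  split_ifs <;> omega

theorem le_phiB_fst (p : (ℕ → ℕ) × (ℕ → ℕ)) (i : ℕ) : p.1 i ≤ (PhiB p).1 i := by
  simp only [PhiB]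
  split_ifs <;> omega

/-- `τ ≤ Φ_C(τ)` on `X_C^{*2}` and `τ ≤ Φ_B(τ)` on `X_B^{*2}`. -/
theorem le_phi :
    (∀ p : (ℕ → ℕ) × (ℕ → ℕ), IsPartition p.1 → IsPartition p.2 →
      (∀ i, p.2 i ≤ p.1 i + 1) → PairLE p (PhiC p)) ∧
    (∀ p : (ℕ → ℕ) × (ℕ → ℕ), IsPartition p.1 → IsPartition p.2 →
      (∀ i, p.1 (i + 1) ≤ p.2 i) → PairLE p (PhiB p)) :=
  ⟨fun p _ _ _ => pairLE_of_shifted_sum_eq_of_snd_le (phiC_fst_zero p).symm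
      (fun i => (phiC_snd_add_fst_succ p i).symm) (le_phiC_snd p),
    fun p _ _ _ => pairLE_of_sum_eq_of_fst_le (fun i => (phiB_fst_add_snd p i).symm)
      (le_phiB_fst p)⟩
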